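/- Let C be a finitely complete centralic category in which regular epimorphisms are stable under binary products, let q : A → A' be a regular epimorphism and f : A' → Z a morphism. If f ∘ q is central then f is central. Moreover, if C is in addition a regular category, then f ∘ q symmetrizable implies f symmetrizable. -/

import Mathlib

open CategoryTheory CategoryTheory.Limits

universe v u

/-- A pointed category with binary products is *centralic*. -/
def Centralic (C : Type u) [Category.{v} C] [HasZeroObject C] [HasZeroMorphisms C]
    [HasBinaryProducts C] : Prop :=
  ∀ ⦃X Y Z S : C⦄ (f : X ⨯ Y ⟶ Z) (x x' : S ⟶ X) (y : S ⟶ Y),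
    prod.lift x 0 ≫ f = prod.lift x' 0 ≫ f →
    prod.lift x y ≫ f = prod.lift x' y ≫ f

/-- `ρ : A ⨯ B ⟶ X` is a cooperator for `f : A ⟶ X` and `g : B ⟶ X`. -/
def IsCooperator {C : Type u} [Category.{v} C] [HasZeroObject C] [HasZeroMorphisms C]
    [HasBinaryProducts C] {A B X : C} (f : A ⟶ X) (g : B ⟶ X) (ρ : A ⨯ B ⟶ X) : Prop :=
  prod.lift (𝟙 A) 0 ≫ ρ = f ∧ prod.lift 0 (𝟙 B) ≫ ρ = g

/-- Two morphisms with common codomain commute if they admit a cooperator. -/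
def Commutes {C : Type u} [Category.{v} C] [HasZeroObject C] [HasZeroMorphisms C]
    [HasBinaryProducts C] {A B X : C} (f : A ⟶ X) (g : B ⟶ X) : Prop :=
  ∃ ρ : A ⨯ B ⟶ X, IsCooperator f g ρ

/-- A morphism `f : A ⟶ B` is central if it commutes with `𝟙 B`. -/
def Central {C : Type u} [Category.{v} C] [HasZeroObject C] [HasZeroMorphisms C]
    [HasBinaryProducts C] {A B : C} (f : A ⟶ B) : Prop :=
  Commutes f (𝟙 B)

/-- `q : X ⟶ Q` is a coequalizer of `u v : A ⟶ X`. -/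
def IsCoequalizerDiagram {C : Type u} [Category.{v} C] {A X Q : C}
    (u v : A ⟶ X) (q : X ⟶ Q) : Prop :=
  u ≫ q = v ≫ q ∧ ∀ ⦃Z : C⦄ (h : X ⟶ Z), u ≫ h = v ≫ h → ∃! t : Q ⟶ Z, q ≫ t = h

/-- A morphism is a regular epimorphism if it is the coequalizer of some pair. -/
def IsRegularEpimorphism {C : Type u} [Category.{v} C] {X Q : C} (q : X ⟶ Q) : Prop :=
  ∃ (A : C) (u v : A ⟶ X), IsCoequalizerDiagram u v q

/-- Regular epimorphisms are stable under binary products. -/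
def RegularEpisStableUnderProducts (C : Type u) [Category.{v} C] [HasBinaryProducts C] : Prop :=
  ∀ ⦃X₁ Q₁ X₂ Q₂ : C⦄ (q₁ : X₁ ⟶ Q₁) (q₂ : X₂ ⟶ Q₂),
    IsRegularEpimorphism q₁ → IsRegularEpimorphism q₂ →
    IsRegularEpimorphism (prod.map q₁ q₂)

/-- A morphism `f` is symmetrizable if it is central, and has an inverse in the
monoid of central morphisms under `f ⋆ g := ρ_f ∘ ⟨1_X, g⟩`. -/
def Symmetrizable {C : Type u} [Category.{v} C] [HasZeroObject C] [HasZeroMorphisms C]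
    [HasBinaryProducts C] {X Y : C} (f : X ⟶ Y) : Prop :=
  ∃ ρf : X ⨯ Y ⟶ Y, IsCooperator f (𝟙 Y) ρf ∧
    ∃ g : X ⟶ Y, Central g ∧ prod.lift (𝟙 X) g ≫ ρf = 0

/-- `C` is a regular category: finitely complete, kernel pairs admit coequalizers,
and regular epimorphisms are stable under pullback. -/
def IsRegularCat (C : Type u) [Category.{v} C] [HasFiniteLimits C] : Prop :=
  (∀ ⦃X Y : C⦄ (f : X ⟶ Y), ∃ (Q : C) (q : X ⟶ Q),
      IsCoequalizerDiagram (pullback.fst f f) (pullback.snd f f) q) ∧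
  (∀ ⦃X Y Y' : C⦄ (f : X ⟶ Y) (g : Y' ⟶ Y),
      IsRegularEpimorphism f → IsRegularEpimorphism (pullback.snd f g))

/-!
A morphism out of `A ⨯ Z` descends along `q ⨯ 𝟙` as soon as its restriction to `A ⨯ 0` does:
`q ⨯ 𝟙` is a regular epimorphism, and centralicity propagates an equality on `A ⨯ 0` to all of
`A ⨯ Z`. Applied to the cooperator of `q ≫ f` this gives centrality of `f`.

For symmetrizability the inverse `g` of `q ≫ f` must itself factor through `q`. Centralicity
makes `ρ(a, -)` cancellable once `ρ` has an inverse, since `ρ(a, σ(a, z)) = z`; hence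
`x ≫ q ≫ f = x' ≫ q ≫ f` gives `ρ(x', x ≫ g) = ρ(x, x ≫ g) = 0 = ρ(x', x' ≫ g)`, so
`x ≫ g = x' ≫ g` and `g` is constant on the kernel pair of `q`.
-/

attribute [local simp] prod.lift_fst prod.lift_snd prod.lift_fst_assoc prod.lift_snd_assoc

section RegularEpi

variable {C : Type u} [Category.{v} C]

theorem IsRegularEpimorphism.exists_fac {X Q : C} {q : X ⟶ Q} (hq : IsRegularEpimorphism q)
    {W : C} (h : X ⟶ W) (hh : ∀ ⦃S : C⦄ (x x' : S ⟶ X), x ≫ q = x' ≫ q → x ≫ h = x' ≫ h) :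
    ∃ h' : Q ⟶ W, q ≫ h' = h := by
  obtain ⟨A, u, v, huv, hcoeq⟩ := hq
  obtain ⟨h', hfac, -⟩ := hcoeq h (hh u v huv)
  exact ⟨h', hfac⟩

theorem IsRegularEpimorphism.epi {X Q : C} {q : X ⟶ Q} (hq : IsRegularEpimorphism q) :
    Epi q where
  left_cancellation a b hab := by
    obtain ⟨A, u, v, huv, hcoeq⟩ := hq
    obtain ⟨t, -, huniq⟩ := hcoeq (q ≫ a) (by simp only [← Category.assoc, huv])
    exact (huniq a rfl).trans (huniq b hab.symm).symm

theorem isRegularEpimorphism_id (Z : C) : IsRegularEpimorphism (𝟙 Z) :=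
  ⟨Z, 𝟙 Z, 𝟙 Z, rfl, fun _ h _ => ⟨h, Category.id_comp h, fun _ ht => by simpa using ht⟩⟩

end RegularEpi

section Cooperators

variable {C : Type u} [Category.{v} C] [HasZeroMorphisms C] [HasBinaryProducts C]

theorem prod_lift_comp_eq_zero {A Z W : C} {g : A ⟶ Z} {ρ : A ⨯ Z ⟶ W}
    (h : prod.lift (𝟙 A) g ≫ ρ = 0) {S : C} (y : S ⟶ A) : prod.lift y (y ≫ g) ≫ ρ = 0 := by
  simpa [prod.comp_lift_assoc] using y ≫= h

variable [HasZeroObject C]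

theorem IsCooperator.lift_zero_right {A B X : C} {f : A ⟶ X} {g : B ⟶ X} {ρ : A ⨯ B ⟶ X}
    (hρ : IsCooperator f g ρ) {S : C} (a : S ⟶ A) : prod.lift a (0 : S ⟶ B) ≫ ρ = a ≫ f := by
  rw [← hρ.1, ← Category.assoc, prod.comp_lift, Category.comp_id, comp_zero]

theorem IsCooperator.lift_zero_left {A B X : C} {f : A ⟶ X} {g : B ⟶ X} {ρ : A ⨯ B ⟶ X}
    (hρ : IsCooperator f g ρ) {S : C} (b : S ⟶ B) : prod.lift (0 : S ⟶ A) b ≫ ρ = b ≫ g := by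
  rw [← hρ.2, ← Category.assoc, prod.comp_lift, Category.comp_id, comp_zero]

theorem IsCooperator.descend (hC : Centralic C) (hstab : RegularEpisStableUnderProducts C)
    {A A' B X : C} {q : A ⟶ A'} (hq : IsRegularEpimorphism q) {k : A' ⟶ X} {g : B ⟶ X}
    {ρ : A ⨯ B ⟶ X} (hρ : IsCooperator (q ≫ k) g ρ) :
    ∃ ρ' : A' ⨯ B ⟶ X, prod.map q (𝟙 B) ≫ ρ' = ρ ∧ IsCooperator k g ρ' := by
  obtain ⟨ρ', hρ'⟩ := (hstab q (𝟙 B) hq (isRegularEpimorphism_id B)).exists_fac ρ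
    fun S x x' hxx' => by
      have hfst : (x ≫ prod.fst) ≫ q = (x' ≫ prod.fst) ≫ q := by simpa using hxx' =≫ prod.fst
      have hsnd : x ≫ prod.snd = x' ≫ prod.snd := by simpa using hxx' =≫ prod.snd
      have hzero : prod.lift (x ≫ prod.fst) 0 ≫ ρ = prod.lift (x' ≫ prod.fst) 0 ≫ ρ := by
        simp only [hρ.lift_zero_right, ← Category.assoc, hfst]
      have hx : x = prod.lift (x ≫ prod.fst) (x ≫ prod.snd) := by simp [← prod.comp_lift]
      have hx' : x' = prod.lift (x' ≫ prod.fst) (x' ≫ prod.snd) := by simp [← prod.comp_lift]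
      rw [hx, hx', ← hsnd]
      exact hC ρ _ _ (x ≫ prod.snd) hzero
  have : Epi q := hq.epi
  refine ⟨ρ', hρ', cancel_epi q |>.mp ?_, ?_⟩
  · rw [← hρ.1, ← hρ']
    simp [prod.comp_lift_assoc]
  · rw [← hρ.2, ← hρ']
    simp

end Cooperators

section Inverses

variable {C : Type u} [Category.{v} C] [HasZeroObject C] [HasZeroMorphisms C]
  [HasBinaryProducts C] (hC : Centralic C) {A Z : C} {h g : A ⟶ Z} {ρ σ : A ⨯ Z ⟶ Z}
  (hρ : IsCooperator h (𝟙 Z) ρ) (hσ : IsCooperator g (𝟙 Z) σ)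
  (hinv : prod.lift (𝟙 A) g ≫ ρ = 0)
include hC hρ hσ hinv

theorem Centralic.cooperator_lift_inverse {S : C} (a : S ⟶ A) (z : S ⟶ Z) :
    prod.lift a (prod.lift a z ≫ σ) ≫ ρ = z := by
  let Ψ : A ⨯ Z ⟶ Z := prod.lift prod.fst σ ≫ ρ
  have eval : ∀ (b : S ⟶ A) (y : S ⟶ Z),
      prod.lift b y ≫ Ψ = prod.lift b (prod.lift b y ≫ σ) ≫ ρ := by
    intro b y
    simp [Ψ, prod.comp_lift_assoc]
  have hzero : prod.lift a (0 : S ⟶ Z) ≫ Ψ = prod.lift 0 0 ≫ Ψ := by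
    rw [eval, eval, hσ.lift_zero_right, hσ.lift_zero_left, zero_comp, hρ.lift_zero_left,
      zero_comp, prod_lift_comp_eq_zero hinv]
  rw [← eval, hC Ψ a 0 z hzero, eval, hσ.lift_zero_left, hρ.lift_zero_left, Category.comp_id,
    Category.comp_id]

theorem Centralic.cooperator_left_cancel {S : C} {a : S ⟶ A} {z₁ z₂ : S ⟶ Z}
    (heq : prod.lift a z₁ ≫ ρ = prod.lift a z₂ ≫ ρ) : z₁ = z₂ := by
  -- `Ω(w, 0) = ρ(w)`, while `Ω((a, z), a) = z` by `cooperator_lift_inverse`.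
  let Ω : (A ⨯ Z) ⨯ A ⟶ Z :=
    prod.lift (prod.fst ≫ prod.fst) (prod.lift prod.snd (prod.fst ≫ prod.snd) ≫ σ) ≫ ρ
  have eval : ∀ (w : S ⟶ A ⨯ Z) (b : S ⟶ A),
      prod.lift w b ≫ Ω = prod.lift (w ≫ prod.fst) (prod.lift b (w ≫ prod.snd) ≫ σ) ≫ ρ := by
    intro w b
    simp [Ω, prod.comp_lift_assoc]
  have hzero : prod.lift (prod.lift a z₁) (0 : S ⟶ A) ≫ Ω = prod.lift (prod.lift a z₂) 0 ≫ Ω := by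
    simpa [eval, hσ.lift_zero_left] using heq
  have := hC Ω _ _ a hzero
  simp only [eval, prod.lift_fst, prod.lift_snd] at this
  rwa [hC.cooperator_lift_inverse hρ hσ hinv, hC.cooperator_lift_inverse hρ hσ hinv] at this

theorem Centralic.comp_inverse_eq_of_comp_eq {S : C} {x x' : S ⟶ A} (hxx' : x ≫ h = x' ≫ h) :
    x ≫ g = x' ≫ g := by
  have hcomp := hC ρ x x' (x ≫ g) (by rw [hρ.lift_zero_right, hρ.lift_zero_right, hxx'])
  refine hC.cooperator_left_cancel hρ hσ hinv (a := x') ?_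
  rw [← hcomp, prod_lift_comp_eq_zero hinv, prod_lift_comp_eq_zero hinv]

end Inverses

theorem stmt13 (C : Type u) [Category.{v} C] [HasZeroObject C] [HasZeroMorphisms C]
    [HasFiniteLimits C] (hC : Centralic C)
    (hstab : RegularEpisStableUnderProducts C)
    {A A' Z : C} (q : A ⟶ A') (hq : IsRegularEpimorphism q) (f : A' ⟶ Z) :
    (Central (q ≫ f) → Central f) ∧
      (IsRegularCat C → Symmetrizable (q ≫ f) → Symmetrizable f) := by
  refine ⟨fun ⟨ρ, hρ⟩ => ?_, fun _ ⟨ρ, hρ, g, ⟨σ, hσ⟩, hinv⟩ => ?_⟩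
  · obtain ⟨ρ', -, hρ'⟩ := hρ.descend hC hstab hq
    exact ⟨ρ', hρ'⟩
  obtain ⟨g', rfl⟩ := hq.exists_fac g fun S x x' hxx' =>
    hC.comp_inverse_eq_of_comp_eq hρ hσ hinv (by simp only [← Category.assoc, hxx'])
  obtain ⟨ρ', hρq, hρ'⟩ := hρ.descend hC hstab hq
  obtain ⟨σ', -, hσ'⟩ := hσ.descend hC hstab hq
  have : Epi q := hq.epi
  refine ⟨ρ', hρ', g', ⟨σ', hσ'⟩, cancel_epi q |>.mp ?_⟩
  rw [comp_zero, ← hinv, ← hρq]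
  simp [prod.comp_lift_assoc]
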